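/- Explicit supersolution for the stable nonlinearity (Step 2 of Lemma 4.2). Let a > 0, b > 0, ϑ ∈ (0,1], A > 0. Let c₄ := inf_{λ>0} ((1+λ)^{1+ϑ} − (1+λ)) / λ^{1+ϑ} and c₁ := (4 c₄^{−1} a^{−1} ϑ^{−1} (2ϑ^{−1} + 1))^{1/ϑ}. Then the function g(x) := (a/b)^{1/ϑ} (1 + c₁ A^{2/ϑ} (A² − x²)^{−2/ϑ}) satisfies (1/2) g″(x) ≤ −a g(x) + b g(x)^{1+ϑ} for all x with |x| < A. -/

import Mathlib

open Topology

/-!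
Write `u = A² - x²`, `p = 2/ϑ`, `s = c₁ A^p u^(-p)` and `K = (a/b)^(1/ϑ)`, the positive
zero of `ψ̃`, so that `g = K (1 + s)`. Then `ψ̃(g) = a K ((1+s)^(1+ϑ) - (1+s)) ≥ a c₄ K s^(1+ϑ)`
by the definition of `c₄`, while `½ g'' = K p s (u + 2(p+1)x²) / u² ≤ 2p(p+1) K s A² / u²`.
Since `s^ϑ = c₁^ϑ A² / u²` and `a c₄ c₁^ϑ = 2p(p+1)`, the two bounds agree.
That `c₄ ≥ ϑ > 0` follows from Bernoulli's inequality `(1+λ)^(-ϑ) ≤ 1 - ϑλ/(1+λ)`.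
-/

noncomputable def stableRatio (ϑ l : ℝ) : ℝ := ((1 + l) ^ (1 + ϑ) - (1 + l)) / l ^ (1 + ϑ)

noncomputable def stableConst (ϑ : ℝ) : ℝ :=
  sInf {y : ℝ | ∃ l : ℝ, 0 < l ∧ y = stableRatio ϑ l}

lemma le_stableRatio {ϑ l : ℝ} (hϑ₀ : 0 ≤ ϑ) (hϑ₁ : ϑ ≤ 1) (hl : 0 < l) :
    ϑ ≤ stableRatio ϑ l := by
  have ht : 0 < 1 + l := by linarith
  have hbern := rpow_one_add_le_one_add_mul_self (s := (1 + l)⁻¹ - 1)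
    (by linarith [inv_pos.2 ht]) hϑ₀ hϑ₁
  rw [add_sub_cancel, Real.inv_rpow ht.le, inv_le_iff_one_le_mul₀ (by positivity)] at hbern
  have hmono : l ^ ϑ ≤ (1 + l) ^ ϑ := Real.rpow_le_rpow hl.le (by linarith) hϑ₀
  rw [stableRatio, le_div_iff₀ (by positivity), Real.rpow_add ht, Real.rpow_add hl,
    Real.rpow_one, Real.rpow_one]
  field_simp at hbern
  nlinarith [mul_le_mul_of_nonneg_left hmono (mul_nonneg hϑ₀ hl.le)]

lemma le_stableConst {ϑ : ℝ} (hϑ₀ : 0 ≤ ϑ) (hϑ₁ : ϑ ≤ 1) : ϑ ≤ stableConst ϑ :=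
  le_csInf ⟨_, 1, one_pos, rfl⟩ fun _ ⟨_, hl, hy⟩ ↦ hy ▸ le_stableRatio hϑ₀ hϑ₁ hl

lemma stableConst_mul_rpow_le {ϑ l : ℝ} (hϑ₀ : 0 ≤ ϑ) (hϑ₁ : ϑ ≤ 1) (hl : 0 < l) :
    stableConst ϑ * l ^ (1 + ϑ) ≤ (1 + l) ^ (1 + ϑ) - (1 + l) := by
  have hbdd : BddBelow {y : ℝ | ∃ l : ℝ, 0 < l ∧ y = stableRatio ϑ l} :=
    ⟨ϑ, fun _ ⟨_, hl, hy⟩ ↦ hy ▸ le_stableRatio hϑ₀ hϑ₁ hl⟩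
  rw [← le_div_iff₀ (by positivity)]
  exact csInf_le hbdd ⟨l, hl, rfl⟩

lemma hasDerivAt_sq_sub_rpow {A x : ℝ} (q : ℝ) (hx : x ^ 2 < A ^ 2) :
    HasDerivAt (fun y ↦ (A ^ 2 - y ^ 2) ^ q) (-2 * q * x * (A ^ 2 - x ^ 2) ^ (q - 1)) x := by
  have h := ((hasDerivAt_pow 2 x).const_sub (A ^ 2)).rpow_const (p := q)
    (Or.inl (sub_pos.2 hx).ne')
  convert h using 1
  push_cast
  ring

lemma deriv_deriv_sq_sub_rpow {A x : ℝ} (q : ℝ) (hx : x ^ 2 < A ^ 2) :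
    deriv (deriv fun y ↦ (A ^ 2 - y ^ 2) ^ q) x =
      2 * q * (2 * (q - 1) * x ^ 2 - (A ^ 2 - x ^ 2)) * (A ^ 2 - x ^ 2) ^ q /
        (A ^ 2 - x ^ 2) ^ 2 := by
  have hu : 0 < A ^ 2 - x ^ 2 := sub_pos.2 hx
  have hderiv : deriv (fun y ↦ (A ^ 2 - y ^ 2) ^ q) =ᶠ[𝓝 x]
      fun y ↦ -2 * q * y * (A ^ 2 - y ^ 2) ^ (q - 1) := by
    filter_upwards [(isOpen_lt (continuous_pow 2) continuous_const).mem_nhds hx] with y hy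
    exact (hasDerivAt_sq_sub_rpow q hy).deriv
  have h : HasDerivAt (fun y ↦ -2 * q * y * (A ^ 2 - y ^ 2) ^ (q - 1)) _ x :=
    ((hasDerivAt_id' x).const_mul (-2 * q)).mul (hasDerivAt_sq_sub_rpow (q - 1) hx)
  rw [hderiv.deriv_eq, h.deriv, sub_sub, one_add_one_eq_two,
    Real.rpow_sub hu, Real.rpow_sub hu, Real.rpow_one, Real.rpow_two]
  field_simp
  ring

noncomputable def stableMechanism (a b ϑ l : ℝ) : ℝ := -a * l + b * l ^ (1 + ϑ)

lemma stableMechanism_root_mul {a b ϑ t : ℝ} (ha : 0 < a) (hb : 0 < b) (hϑ : ϑ ≠ 0)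
    (ht : 0 ≤ t) :
    stableMechanism a b ϑ ((a / b) ^ (1 / ϑ) * t) =
      a * (a / b) ^ (1 / ϑ) * (t ^ (1 + ϑ) - t) := by
  have hab : 0 < a / b := div_pos ha hb
  rw [stableMechanism, Real.mul_rpow (by positivity) ht, Real.rpow_add (by positivity),
    Real.rpow_one, ← Real.rpow_mul hab.le, one_div_mul_cancel hϑ, Real.rpow_one]
  field_simp
  ring

theorem stable_supersolution
    (a b ϑ A : ℝ) (ha : 0 < a) (hb : 0 < b) (hϑ₀ : 0 < ϑ) (hϑ₁ : ϑ ≤ 1)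
    (c₄ : ℝ) (hc₄ : c₄ = sInf {y : ℝ | ∃ l : ℝ, 0 < l ∧
        y = ((1 + l) ^ (1 + ϑ) - (1 + l)) / l ^ (1 + ϑ)})
    (c₁ : ℝ) (hc₁ : c₁ = (4 * c₄⁻¹ * a⁻¹ * ϑ⁻¹ * (2 * ϑ⁻¹ + 1)) ^ (1 / ϑ))
    (g : ℝ → ℝ) (hg : g = fun x : ℝ =>
      (a / b) ^ (1 / ϑ) * (1 + c₁ * A ^ (2 / ϑ) * (A ^ 2 - x ^ 2) ^ (-(2 / ϑ)))) :
    ∀ x : ℝ, |x| < A →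
      (1 / 2) * deriv (deriv g) x ≤ -a * g x + b * g x ^ (1 + ϑ) := by
  intro x hx
  have hA : 0 < A := (abs_nonneg x).trans_lt hx
  have hxA : x ^ 2 < A ^ 2 := sq_lt_sq' (abs_lt.1 hx).1 (abs_lt.1 hx).2
  obtain rfl : c₄ = stableConst ϑ := hc₄
  have hc₄pos : 0 < stableConst ϑ := hϑ₀.trans_le (le_stableConst hϑ₀.le hϑ₁)
  set X := 4 * (stableConst ϑ)⁻¹ * a⁻¹ * ϑ⁻¹ * (2 * ϑ⁻¹ + 1) with hX
  have hXpos : 0 < X := by positivity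
  set u := A ^ 2 - x ^ 2 with hu_def
  have hu : 0 < u := sub_pos.2 hxA
  set K := (a / b) ^ (1 / ϑ)
  set p := 2 / ϑ with hp
  set s := c₁ * A ^ p * u ^ (-p) with hs_def
  have hs : 0 < s := by rw [hs_def, hc₁]; positivity
  have hsϑ : s ^ ϑ = X * A ^ 2 / u ^ 2 := by
    rw [hs_def, hc₁, Real.mul_rpow (by positivity) (by positivity),
      Real.mul_rpow (by positivity) (by positivity), ← Real.rpow_mul hXpos.le,
      ← Real.rpow_mul hA.le, ← Real.rpow_mul hu.le, one_div_mul_cancel hϑ₀.ne', neg_mul,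
      div_mul_cancel₀ _ hϑ₀.ne', Real.rpow_one, Real.rpow_neg hu.le, Real.rpow_two,
      Real.rpow_two, div_eq_mul_inv]
  have hg'' : (1 / 2) * deriv (deriv g) x = K * p * s * (u + 2 * (p + 1) * x ^ 2) / u ^ 2 := by
    subst hg
    simp only [deriv_const_mul_field', deriv_const_add']
    rw [deriv_deriv_sq_sub_rpow _ hxA]
    ring
  have hψ : -a * g x + b * g x ^ (1 + ϑ) = a * K * ((1 + s) ^ (1 + ϑ) - (1 + s)) := by
    subst hg
    exact stableMechanism_root_mul ha hb hϑ₀.ne' (by positivity)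
  calc (1 / 2) * deriv (deriv g) x = K * p * s * (u + 2 * (p + 1) * x ^ 2) / u ^ 2 := hg''
    _ ≤ K * p * s * ((2 * p + 2) * A ^ 2) / u ^ 2 := by
      gcongr
      rw [hu_def]
      nlinarith [mul_pos (by positivity : 0 < p) hu]
    _ = a * K * (stableConst ϑ * s ^ (1 + ϑ)) := by
      rw [Real.rpow_add hs, Real.rpow_one, hsϑ, hX, hp]
      field_simp
      ring
    _ ≤ a * K * ((1 + s) ^ (1 + ϑ) - (1 + s)) := by
      gcongr
      exact stableConst_mul_rpow_le hϑ₀.le hϑ₁ hs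
    _ = _ := hψ.symm
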